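/- arXiv:2605.16051 — 4 statements merged into one kernel-verified Lean document; each statement's English description precedes it below -/
import Mathlib

section
/- If an absolutely monotonic power series I(x) = Σ a_n x^n (not identically zero) has summands that concentrate superpolynomially near n ≈ f(x) with window term C x^{-ν}, where f is a polynomial with positive leading coefficient, then ν ≤ deg f. -/
open Filter Asymptotics Polynomial

noncomputable def Iser (a : ℕ → ℝ) (x : ℝ) : ℝ := ∑' n : ℕ, a n * x ^ n

noncomputable def sumLE (a : ℕ → ℝ) (x y : ℝ) : ℝ :=
  ∑' n : ℕ, if (n : ℤ) ≤ ⌊y⌋ then a n * x ^ n else 0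

noncomputable def sumGE (a : ℕ → ℝ) (x y : ℝ) : ℝ :=
  ∑' n : ℕ, if ⌊y⌋ ≤ (n : ℤ) then a n * x ^ n else 0

/-- `I(x) = Σ aₙ xⁿ` is absolutely monotonic: all coefficients are nonnegative and
the series converges for every `x > 0`. -/
def AbsMono (a : ℕ → ℝ) : Prop :=
  (∀ n, 0 ≤ a n) ∧ ∀ x : ℝ, 0 < x → Summable fun n : ℕ => a n * x ^ n

/-- The summands of `Σ aₙ xⁿ` concentrate superpolynomially near `n ≈ f(x)` with
window term `C x^{-ν}`. -/
def SuperConc (a : ℕ → ℝ) (f : ℝ → ℝ) (C ν : ℝ) : Prop :=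
  ∀ p : ℝ, 0 < p →
    ((fun x : ℝ => sumLE a x (f x * (1 - C * x ^ (-ν))) / Iser a x)
        =o[atTop] fun x : ℝ => x ^ (-p)) ∧
    ((fun x : ℝ => sumGE a x (f x * (1 + C * x ^ (-ν))) / Iser a x)
        =o[atTop] fun x : ℝ => x ^ (-p))

/-- The summands of `Σ aₙ xⁿ` concentrate exponentially near `n ≈ f(x)` with
window term `C x^{-ν}` and parameters `(α, β)`. -/
def ExpConc (a : ℕ → ℝ) (f : ℝ → ℝ) (C ν α β : ℝ) : Prop :=
  ((fun x : ℝ => sumLE a x (f x * (1 - C * x ^ (-ν))) / Iser a x)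
      =O[atTop] fun x : ℝ => Real.exp (-α * x ^ β)) ∧
  ((fun x : ℝ => sumGE a x (f x * (1 + C * x ^ (-ν))) / Iser a x)
      =O[atTop] fun x : ℝ => Real.exp (-α * x ^ β))

/-- A real sequence is subpolynomial if `bₙ / n^p → 0` for every `p > 0`. -/
def Subpoly (b : ℕ → ℝ) : Prop :=
  ∀ p : ℝ, 0 < p → Tendsto (fun n : ℕ => b n / (n : ℝ) ^ p) atTop (nhds 0)

/-! If `ν > deg f`, the window `[f(x)(1 - C x^{-ν}), f(x)(1 + C x^{-ν})]` eventually has width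
`2C f(x) x^{-ν} ≤ 1`, so the two tails `n ≤ n₋(x)` and `n ≥ n₊(x)` together cover every index
and carry the whole mass `I(x) > 0`. Superpolynomial concentration says that both tails are
`o(I(x))`, which is absurd. -/

open Topology

theorem Polynomial.tendsto_eval_mul_rpow_neg_atTop (f : ℝ[X]) {ν : ℝ}
    (hν : (f.natDegree : ℝ) < ν) :
    Tendsto (fun x : ℝ => f.eval x * x ^ (-ν)) atTop (𝓝 0) := by
  have hf : (fun x : ℝ => f.eval x) =O[atTop] fun x : ℝ => x ^ f.natDegree :=
    f.isEquivalent_atTop_lead.isBigO.trans (isBigO_const_mul_self _ _ _)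
  refine (hf.mul (isBigO_refl (fun x : ℝ => x ^ (-ν)) atTop)).trans_tendsto ?_
  refine (tendsto_rpow_neg_atTop (y := ν - f.natDegree) (by linarith)).congr' ?_
  filter_upwards [eventually_gt_atTop 0] with x hx
  rw [← Real.rpow_natCast, ← Real.rpow_add hx]
  ring_nf

section

variable {a : ℕ → ℝ} {x : ℝ}

theorem summable_ite_mul_pow (p : ℕ → Prop) [DecidablePred p]
    (hterm : ∀ n, 0 ≤ a n * x ^ n) (hsum : Summable fun n => a n * x ^ n) :
    Summable fun n => if p n then a n * x ^ n else 0 :=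
  hsum.of_nonneg_of_le (fun n => by split_ifs <;> simp [hterm n])
    (fun n => by split_ifs <;> simp [hterm n])

theorem Iser_le_sumLE_add_sumGE (hterm : ∀ n, 0 ≤ a n * x ^ n)
    (hsum : Summable fun n => a n * x ^ n) {y y' : ℝ} (hy : y' ≤ y + 1) :
    Iser a x ≤ sumLE a x y + sumGE a x y' := by
  have hfloor : ⌊y'⌋ ≤ ⌊y⌋ + 1 := (Int.floor_le_floor hy).trans_eq (Int.floor_add_one y)
  have hcover : ∀ n : ℕ, a n * x ^ n ≤
      (if (n : ℤ) ≤ ⌊y⌋ then a n * x ^ n else 0)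
        + (if ⌊y'⌋ ≤ (n : ℤ) then a n * x ^ n else 0) := by
    intro n
    by_cases hn : (n : ℤ) ≤ ⌊y⌋
    · rw [if_pos hn]
      split_ifs <;> linarith [hterm n]
    · rw [if_neg hn, if_pos (by omega)]
      simp
  have hLE := summable_ite_mul_pow (fun n : ℕ => (n : ℤ) ≤ ⌊y⌋) hterm hsum
  have hGE := summable_ite_mul_pow (fun n : ℕ => ⌊y'⌋ ≤ (n : ℤ)) hterm hsum
  rw [sumLE, sumGE, ← hLE.tsum_add hGE]
  exact hsum.tsum_le_tsum hcover (hLE.add hGE)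

theorem AbsMono.Iser_pos (ha : AbsMono a) (hne : ∃ n, a n ≠ 0) (hx : 0 < x) :
    0 < Iser a x := by
  obtain ⟨n, hn⟩ := hne
  exact (ha.2 x hx).tsum_pos (fun k => mul_nonneg (ha.1 k) (pow_nonneg hx.le k)) n
    (mul_pos ((ha.1 n).lt_of_ne' hn) (pow_pos hx n))

theorem AbsMono.one_le_sumLE_div_add_sumGE_div (ha : AbsMono a) (hne : ∃ n, a n ≠ 0)
    (hx : 0 < x) {y y' : ℝ} (hy : y' ≤ y + 1) :
    1 ≤ sumLE a x y / Iser a x + sumGE a x y' / Iser a x := by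
  rw [← add_div, le_div_iff₀ (ha.Iser_pos hne hx), one_mul]
  exact Iser_le_sumLE_add_sumGE (fun n => mul_nonneg (ha.1 n) (pow_nonneg hx.le n))
    (ha.2 x hx) hy

theorem SuperConc.tendsto_sumLE_div_add_sumGE_div {f : ℝ → ℝ} {C ν : ℝ}
    (h : SuperConc a f C ν) :
    Tendsto (fun x => sumLE a x (f x * (1 - C * x ^ (-ν))) / Iser a x
      + sumGE a x (f x * (1 + C * x ^ (-ν))) / Iser a x) atTop (𝓝 0) :=
  ((h 1 one_pos).1.add (h 1 one_pos).2).isBigO.trans_tendsto (tendsto_rpow_neg_atTop one_pos)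

end

theorem stmt1_general (a : ℕ → ℝ) (f : Polynomial ℝ) (C ν : ℝ)
    (ha : AbsMono a) (hne : ∃ n, a n ≠ 0)
    (hconc : SuperConc a (fun x => f.eval x) C ν) :
    ν ≤ (f.natDegree : ℝ) := by
  by_contra! hdeg
  have hwidth : ∀ᶠ x : ℝ in atTop,
      f.eval x * (1 + C * x ^ (-ν)) ≤ f.eval x * (1 - C * x ^ (-ν)) + 1 := by
    have hsmall : Tendsto (fun x : ℝ => 2 * C * (f.eval x * x ^ (-ν))) atTop (𝓝 0) := by
      simpa using (f.tendsto_eval_mul_rpow_neg_atTop hdeg).const_mul (2 * C)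
    filter_upwards [hsmall.eventually (eventually_le_nhds one_pos)] with x hx
    linarith
  obtain ⟨x, ⟨hx, hxpos⟩, hxlt⟩ := ((hwidth.and (eventually_gt_atTop 0)).and
    (hconc.tendsto_sumLE_div_add_sumGE_div.eventually (eventually_lt_nhds one_pos))).exists
  linarith [ha.one_le_sumLE_div_add_sumGE_div hne hxpos hx]

theorem stmt1 (a : ℕ → ℝ) (f : Polynomial ℝ) (C ν : ℝ) (hC : 0 < C) (hν : 0 < ν)
    (ha : AbsMono a) (hne : ∃ n, a n ≠ 0) (hlead : 0 < f.leadingCoeff)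
    (hconc : SuperConc a (fun x => f.eval x) C ν) :
    ν ≤ (f.natDegree : ℝ) :=
  stmt1_general a f C ν ha hne hconc
end

section
/- If an absolutely monotonic power series I(x) = Σ a_n x^n (not identically zero) has summands that concentrate superpolynomially near n ≈ f(x) with window term C x^{-ν}, then there are infinitely many indices n with a_n > 0; in particular, I is not a polynomial. -/
open Filter Asymptotics Polynomial

/-! If only `a_0, …, a_N` are nonzero, then for `x ≥ 1` the term `a_N x^N` carries a fixed fraction
of `I(x)`, while eventually it lies in one of the two tails, whose shares tend to `0`. -/

open Topology

theorem Int.le_floor_or_floor_le_of_lt_add_one {u v : ℝ} (N : ℤ) (h : v < u + 1) :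
    N ≤ ⌊u⌋ ∨ ⌊v⌋ ≤ N := by
  by_cases hN : (N : ℝ) ≤ u
  · exact .inl (Int.le_floor.mpr hN)
  · refine .inr (Int.lt_add_one_iff.mp (Int.floor_lt.mpr ?_))
    push_cast
    linarith

/-- For nonconstant `f` the window escapes to `+∞`; for constant `f` its width tends to `0`. -/
theorem Polynomial.eventually_le_floor_or_floor_le (f : ℝ[X]) (hlead : 0 < f.leadingCoeff)
    {w : ℝ → ℝ} (hw : Tendsto w atTop (𝓝 0)) (N : ℤ) :
    ∀ᶠ x in atTop, N ≤ ⌊f.eval x * (1 - w x)⌋ ∨ ⌊f.eval x * (1 + w x)⌋ ≤ N := by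
  rcases lt_or_ge 0 f.degree with hdeg | hdeg
  · have hlow : Tendsto (fun x => f.eval x * (1 - w x)) atTop atTop :=
      (f.tendsto_atTop_of_leadingCoeff_nonneg hdeg hlead.le).atTop_mul_pos one_pos
        (by simpa using (tendsto_const_nhds (x := (1 : ℝ))).sub hw)
    filter_upwards [hlow.eventually_ge_atTop (N : ℝ)] with x hx
    exact .inl (Int.le_floor.mpr hx)
  · have hwidth : Tendsto (fun x => 2 * f.coeff 0 * w x) atTop (𝓝 0) := by
      simpa using hw.const_mul (2 * f.coeff 0)
    filter_upwards [hwidth.eventually_lt_const one_pos] with x hx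
    refine Int.le_floor_or_floor_le_of_lt_add_one N ?_
    rw [eq_C_of_degree_le_zero hdeg, eval_C]
    linarith

theorem exists_pos_forall_gt_eq_zero_of_finite {a : ℕ → ℝ} (ha : ∀ n, 0 ≤ a n)
    (hne : ∃ n, a n ≠ 0) (hfin : {n | 0 < a n}.Finite) :
    ∃ N, 0 < a N ∧ ∀ n, N < n → a n = 0 := by
  obtain ⟨m, hm⟩ := hne
  have hpos : ∀ n, a n ≠ 0 → 0 < a n := fun n hn => (ha n).lt_of_ne' hn
  refine ⟨sSup {n | 0 < a n}, Nat.sSup_mem ⟨m, hpos m hm⟩ hfin.bddAbove, fun n hn => ?_⟩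
  by_contra h
  exact hn.not_ge (le_csSup hfin.bddAbove (hpos n h))

theorem le_tsum_ite_of_nonneg {g : ℕ → ℝ} (hg : ∀ n, 0 ≤ g n) (hs : Summable g)
    {p : ℕ → Prop} [DecidablePred p] {N : ℕ} (hN : p N) :
    g N ≤ ∑' n, if p n then g n else 0 := by
  have hite : ∀ n, 0 ≤ if p n then g n else 0 := fun n => by split_ifs <;> simp [hg n]
  have hs' : Summable fun n => if p n then g n else 0 :=
    hs.of_nonneg_of_le hite fun n => by split_ifs <;> simp [hg n]
  simpa [hN] using hs'.le_tsum N fun n _ => hite n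

theorem AbsMono.term_le_sumLE {a : ℕ → ℝ} (ha : AbsMono a) {x y : ℝ} (hx : 0 < x) {N : ℕ}
    (hN : (N : ℤ) ≤ ⌊y⌋) : a N * x ^ N ≤ sumLE a x y :=
  le_tsum_ite_of_nonneg (fun n => mul_nonneg (ha.1 n) (pow_nonneg hx.le n)) (ha.2 x hx) hN

theorem AbsMono.term_le_sumGE {a : ℕ → ℝ} (ha : AbsMono a) {x y : ℝ} (hx : 0 < x) {N : ℕ}
    (hN : ⌊y⌋ ≤ (N : ℤ)) : a N * x ^ N ≤ sumGE a x y :=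
  le_tsum_ite_of_nonneg (fun n => mul_nonneg (ha.1 n) (pow_nonneg hx.le n)) (ha.2 x hx) hN

theorem div_sum_le_div_Iser_of_term_le {a : ℕ → ℝ} (ha : ∀ n, 0 ≤ a n) {N : ℕ} (haN : 0 < a N)
    (hzero : ∀ n, N < n → a n = 0) {x S : ℝ} (hx : 1 ≤ x) (hS : a N * x ^ N ≤ S) :
    a N / ∑ n ∈ Finset.range (N + 1), a n ≤ S / Iser a x := by
  have hvan : ∀ n ∉ Finset.range (N + 1), a n * x ^ n = 0 := fun n hn => by
    rw [hzero n (by simpa [Nat.lt_succ_iff] using hn), zero_mul]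
  have hIser : Iser a x = ∑ n ∈ Finset.range (N + 1), a n * x ^ n := tsum_eq_sum hvan
  have hterm_pos : 0 < a N * x ^ N := mul_pos haN (pow_pos (by linarith) N)
  have hterm_le : a N * x ^ N ≤ Iser a x := hIser ▸ Finset.single_le_sum
    (f := fun n => a n * x ^ n) (fun n _ => mul_nonneg (ha n) (pow_nonneg (by linarith) n))
    (Finset.self_mem_range_succ N)
  have hIser_le : Iser a x ≤ (∑ n ∈ Finset.range (N + 1), a n) * x ^ N := by
    rw [hIser, Finset.sum_mul]
    refine Finset.sum_le_sum fun n hn => mul_le_mul_of_nonneg_left ?_ (ha n)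
    exact pow_le_pow_right₀ hx (Nat.lt_succ_iff.mp (Finset.mem_range.mp hn))
  have hsum_pos : 0 < ∑ n ∈ Finset.range (N + 1), a n :=
    haN.trans_le (Finset.single_le_sum (fun n _ => ha n) (Finset.self_mem_range_succ N))
  rw [div_le_div_iff₀ hsum_pos (hterm_pos.trans_le hterm_le)]
  calc a N * Iser a x ≤ a N * ((∑ n ∈ Finset.range (N + 1), a n) * x ^ N) :=
        mul_le_mul_of_nonneg_left hIser_le haN.le
    _ = a N * x ^ N * ∑ n ∈ Finset.range (N + 1), a n := by ring
    _ ≤ S * ∑ n ∈ Finset.range (N + 1), a n := mul_le_mul_of_nonneg_right hS hsum_pos.le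

theorem SuperConc.tendsto_zero {a : ℕ → ℝ} {f : ℝ → ℝ} {C ν : ℝ} (h : SuperConc a f C ν) :
    Tendsto (fun x => sumLE a x (f x * (1 - C * x ^ (-ν))) / Iser a x) atTop (𝓝 0) ∧
      Tendsto (fun x => sumGE a x (f x * (1 + C * x ^ (-ν))) / Iser a x) atTop (𝓝 0) :=
  ⟨(h 1 one_pos).1.trans_tendsto (tendsto_rpow_neg_atTop one_pos),
    (h 1 one_pos).2.trans_tendsto (tendsto_rpow_neg_atTop one_pos)⟩

theorem stmt2_general (a : ℕ → ℝ) (f : Polynomial ℝ) (C ν : ℝ) (hν : 0 < ν)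
    (ha : AbsMono a) (hne : ∃ n, a n ≠ 0) (hlead : 0 < f.leadingCoeff)
    (hconc : SuperConc a (fun x => f.eval x) C ν) :
    {n : ℕ | 0 < a n}.Infinite := by
  intro hfin
  obtain ⟨N, haN, hzero⟩ := exists_pos_forall_gt_eq_zero_of_finite ha.1 hne hfin
  have hε : 0 < a N / ∑ n ∈ Finset.range (N + 1), a n :=
    div_pos haN (haN.trans_le (Finset.single_le_sum (fun n _ => ha.1 n)
      (Finset.self_mem_range_succ N)))
  have hw : Tendsto (fun x : ℝ => C * x ^ (-ν)) atTop (𝓝 0) := by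
    simpa using (tendsto_rpow_neg_atTop hν).const_mul C
  obtain ⟨hlow, hhigh⟩ := hconc.tendsto_zero
  obtain ⟨x, ⟨hlow_lt, hhigh_lt⟩, hN, hx⟩ :=
    (((hlow.eventually_lt_const hε).and (hhigh.eventually_lt_const hε)).and
      ((f.eventually_le_floor_or_floor_le hlead hw N).and (eventually_ge_atTop 1))).exists
  rcases hN with hN | hN
  · exact hlow_lt.not_ge (div_sum_le_div_Iser_of_term_le ha.1 haN hzero hx
      (ha.term_le_sumLE (by linarith) hN))
  · exact hhigh_lt.not_ge (div_sum_le_div_Iser_of_term_le ha.1 haN hzero hx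
      (ha.term_le_sumGE (by linarith) hN))

theorem stmt2 (a : ℕ → ℝ) (f : Polynomial ℝ) (C ν : ℝ) (hC : 0 < C) (hν : 0 < ν)
    (ha : AbsMono a) (hne : ∃ n, a n ≠ 0) (hlead : 0 < f.leadingCoeff)
    (hconc : SuperConc a (fun x => f.eval x) C ν) :
    {n : ℕ | 0 < a n}.Infinite :=
  stmt2_general a f C ν hν ha hne hlead hconc
end

section
/- Suppose the summands of an absolutely monotonic power series I(x) = Σ a_n x^n concentrate superpolynomially near n ≈ f(x) with window term C x^{-ν}. Let μ(x) := max_{n≥0} a_n x^n. Then there exists X > 0 such that for all x > X, every index n achieving a_n x^n = μ(x) satisfies n_-(x) < n < n_+(x), where n_±(x) = ⌊f(x)(1 ± C x^{-ν})⌋. -/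
open Filter Asymptotics Polynomial

lemma tsum_split_bound (g : ℕ → ℝ) (hg0 : ∀ n, 0 ≤ g n) (hs : Summable g)
    (A B : ℤ) (μ : ℝ) (hμ : ∀ m, g m ≤ μ) (N : ℕ)
    (hN : ∀ m : ℕ, A < (m : ℤ) → (m : ℤ) < B → m < N) :
    ∑' n, g n ≤ (∑' n : ℕ, if (n : ℤ) ≤ A then g n else 0)
      + (∑' n : ℕ, if B ≤ (n : ℤ) then g n else 0) + N * μ := by
  have hμ0 : 0 ≤ μ := le_trans (hg0 0) (hμ 0)
  set gLE : ℕ → ℝ := fun n => if (n : ℤ) ≤ A then g n else 0 with hgLE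
  set gGE : ℕ → ℝ := fun n => if B ≤ (n : ℤ) then g n else 0 with hgGE
  set gMID : ℕ → ℝ := fun n => if A < (n : ℤ) ∧ (n : ℤ) < B then g n else 0 with hgMID
  set gGT : ℕ → ℝ := fun n => if A < (n : ℤ) ∧ B ≤ (n : ℤ) then g n else 0 with hgGT
  have nn : ∀ (h : ℕ → ℝ), (∀ n, h n = g n ∨ h n = 0) → (∀ n, 0 ≤ h n) ∧ (∀ n, h n ≤ g n) := by
    intro h hh
    constructor <;> intro n <;> rcases hh n with h1 | h1 <;> simp only [h1] <;>
      first | exact hg0 n | exact le_rfl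
  have hLE := nn gLE (by intro n; by_cases h : (n : ℤ) ≤ A <;> simp [hgLE, h])
  have hGE := nn gGE (by intro n; by_cases h : B ≤ (n : ℤ) <;> simp [hgGE, h])
  have hMID := nn gMID (by intro n; by_cases h : A < (n : ℤ) ∧ (n : ℤ) < B <;> simp [hgMID, h])
  have hGT := nn gGT (by intro n; by_cases h : A < (n : ℤ) ∧ B ≤ (n : ℤ) <;> simp [hgGT, h])
  have sLE : Summable gLE := Summable.of_nonneg_of_le hLE.1 hLE.2 hs
  have sGE : Summable gGE := Summable.of_nonneg_of_le hGE.1 hGE.2 hs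
  have sMID : Summable gMID := Summable.of_nonneg_of_le hMID.1 hMID.2 hs
  have sGT : Summable gGT := Summable.of_nonneg_of_le hGT.1 hGT.2 hs
  have hsplit : ∀ n, g n = gLE n + gMID n + gGT n := by
    intro n
    simp only [hgLE, hgMID, hgGT]
    rcases le_or_gt (n : ℤ) A with h1 | h1
    · rw [if_pos h1, if_neg (by omega), if_neg (by omega)]; ring
    · rw [if_neg (by omega)]
      rcases lt_or_ge (n : ℤ) B with h2 | h2
      · rw [if_pos ⟨h1, h2⟩, if_neg (by omega)]; ring
      · rw [if_neg (by omega), if_pos ⟨h1, h2⟩]; ring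
  have heq : ∑' n, g n = (∑' n, gLE n) + (∑' n, gMID n) + (∑' n, gGT n) := by
    calc ∑' n, g n = ∑' n, (gLE n + gMID n + gGT n) := tsum_congr hsplit
      _ = (∑' n, gLE n) + (∑' n, gMID n) + (∑' n, gGT n) := by
          rw [Summable.tsum_add (sLE.add sMID) sGT, Summable.tsum_add sLE sMID]
  have hGTle : (∑' n, gGT n) ≤ ∑' n, gGE n := by
    refine Summable.tsum_le_tsum (fun n => ?_) sGT sGE
    simp only [hgGT, hgGE]
    by_cases h : A < (n : ℤ) ∧ B ≤ (n : ℤ)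
    · rw [if_pos h, if_pos h.2]
    · rw [if_neg h]; exact hGE.1 n
  have hMIDle : (∑' n, gMID n) ≤ N * μ := by
    have : (∑' n, gMID n) = ∑ n ∈ Finset.range N, gMID n := by
      refine tsum_eq_sum (fun b hb => ?_)
      simp only [Finset.mem_range, not_lt] at hb
      simp only [hgMID]
      rw [if_neg]
      rintro ⟨h1, h2⟩
      exact absurd (hN b h1 h2) (by omega)
    rw [this]
    calc ∑ n ∈ Finset.range N, gMID n ≤ ∑ _n ∈ Finset.range N, μ :=
          Finset.sum_le_sum (fun i _ => le_trans (hMID.2 i) (hμ i))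
      _ = N * μ := by rw [Finset.sum_const, Finset.card_range]; simp
  rw [heq]
  linarith

set_option maxHeartbeats 1000000 in
theorem stmt3 (a : ℕ → ℝ) (f : Polynomial ℝ) (C ν : ℝ) (hC : 0 < C) (hν : 0 < ν)
    (ha : AbsMono a) (hne : ∃ n, a n ≠ 0) (hlead : 0 < f.leadingCoeff)
    (hconc : SuperConc a (fun x => f.eval x) C ν) :
    ∃ X : ℝ, 0 < X ∧ ∀ x : ℝ, X < x → ∀ n : ℕ,
      (∀ m : ℕ, a m * x ^ m ≤ a n * x ^ n) →
      ⌊f.eval x * (1 - C * x ^ (-ν))⌋ < (n : ℤ) ∧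
        (n : ℤ) < ⌊f.eval x * (1 + C * x ^ (-ν))⌋ := by
  obtain ⟨k, hk⟩ := hne
  have hak : 0 < a k := lt_of_le_of_ne (ha.1 k) (Ne.symm hk)
  set d : ℕ := f.natDegree with hd
  set lc : ℝ := f.leadingCoeff with hlc
  set B : ℝ := 2 * lc * (1 + C) with hB
  set p : ℝ := (d : ℝ) + 2 with hp
  have hppos : 0 < p := by positivity
  obtain ⟨h1, h2⟩ := hconc p hppos
  have hb1 := h1.def one_half_pos
  have hb2 := h2.def one_half_pos
  have hequiv := (Polynomial.isEquivalent_atTop_lead f).def one_half_pos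
  have htend : ∀ᶠ x : ℝ in atTop, x ^ (-p) < 1 / 2 :=
    (tendsto_rpow_neg_atTop hppos).eventually_lt_const (by norm_num)
  have hBx : ∀ᶠ x : ℝ in atTop, B < x ^ 2 :=
    (tendsto_pow_atTop two_ne_zero).eventually_gt_atTop B
  have hall := (((hb1.and hb2).and (hequiv.and htend)).and hBx).and (eventually_gt_atTop (1 : ℝ))
  rw [eventually_atTop] at hall
  obtain ⟨X0, hX0⟩ := hall
  refine ⟨max X0 1, lt_of_lt_of_le one_pos (le_max_right _ _), fun x hx n hn => ?_⟩
  obtain ⟨⟨⟨⟨hb1x, hb2x⟩, hfx, hxp⟩, hBxx⟩, hx1⟩ :=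
    hX0 x (le_of_lt (lt_of_le_of_lt (le_max_left _ _) hx))
  simp only [Pi.sub_apply, Real.norm_eq_abs] at hb1x hb2x hfx
  have hx0 : 0 < x := lt_trans one_pos hx1
  -- polynomial bounds
  have hLpos : 0 < lc * x ^ d := by positivity
  have habs : |f.eval x - lc * x ^ d| ≤ 1 / 2 * (lc * x ^ d) := by
    have h := hfx
    rwa [abs_of_pos hLpos] at h
  rw [abs_le] at habs
  have hfpos : 0 < f.eval x := by nlinarith
  have hfub : f.eval x ≤ 2 * lc * x ^ d := by nlinarith
  -- window quantities
  set y1 : ℝ := f.eval x * (1 - C * x ^ (-ν)) with hy1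
  set y2 : ℝ := f.eval x * (1 + C * x ^ (-ν)) with hy2
  have hrν : (0 : ℝ) < x ^ (-ν) := Real.rpow_pos_of_pos hx0 _
  have hrν1 : x ^ (-ν) ≤ 1 :=
    Real.rpow_le_one_of_one_le_of_nonpos (le_of_lt hx1) (by linarith)
  have hy2pos : 0 < y2 := by
    rw [hy2]
    have h' : 0 < 1 + C * x ^ (-ν) := by positivity
    positivity
  have hy2ub : y2 ≤ B * x ^ d :=
    calc y2 ≤ f.eval x * (1 + C) := by
          apply mul_le_mul_of_nonneg_left _ (le_of_lt hfpos)
          have : C * x ^ (-ν) ≤ C := mul_le_of_le_one_right (le_of_lt hC) hrν1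
          linarith
      _ ≤ 2 * lc * x ^ d * (1 + C) :=
          mul_le_mul_of_nonneg_right hfub (by linarith)
      _ = B * x ^ d := by rw [hB]; ring
  -- series facts
  set g : ℕ → ℝ := fun m => a m * x ^ m with hg
  have hg0 : ∀ m, 0 ≤ g m := fun m => mul_nonneg (ha.1 m) (by positivity)
  have hs : Summable g := ha.2 x hx0
  set I : ℝ := Iser a x with hI
  have hIg : I = ∑' m, g m := rfl
  have hgk : 0 < g k := by simp only [hg]; positivity
  have hIpos : 0 < I := by
    rw [hIg]
    exact lt_of_lt_of_le hgk (Summable.le_tsum hs k (fun j _ => hg0 j))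
  set μ : ℝ := a n * x ^ n with hμdef
  have hμ : ∀ m, g m ≤ μ := hn
  have hμpos : 0 < μ := lt_of_lt_of_le hgk (hμ k)
  -- summability of tail pieces
  have sLE : Summable (fun m : ℕ => if (m : ℤ) ≤ ⌊y1⌋ then g m else 0) := by
    refine Summable.of_nonneg_of_le (fun m => ?_) (fun m => ?_) hs <;>
      by_cases h : (m : ℤ) ≤ ⌊y1⌋ <;> simp [h, hg0 m]
  have sGE : Summable (fun m : ℕ => if ⌊y2⌋ ≤ (m : ℤ) then g m else 0) := by
    refine Summable.of_nonneg_of_le (fun m => ?_) (fun m => ?_) hs <;>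
      by_cases h : ⌊y2⌋ ≤ (m : ℤ) <;> simp [h, hg0 m]
  have hsLEeq : sumLE a x y1 = ∑' m : ℕ, if (m : ℤ) ≤ ⌊y1⌋ then g m else 0 := rfl
  have hsGEeq : sumGE a x y2 = ∑' m : ℕ, if ⌊y2⌋ ≤ (m : ℤ) then g m else 0 := rfl
  have hsumLE0 : 0 ≤ sumLE a x y1 := by
    rw [hsLEeq]
    exact tsum_nonneg (fun m => by by_cases h : (m : ℤ) ≤ ⌊y1⌋ <;> simp [h, hg0 m])
  have hsumGE0 : 0 ≤ sumGE a x y2 := by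
    rw [hsGEeq]
    exact tsum_nonneg (fun m => by by_cases h : ⌊y2⌋ ≤ (m : ℤ) <;> simp [h, hg0 m])
  have hxppos : (0 : ℝ) < x ^ (-p) := Real.rpow_pos_of_pos hx0 _
  -- little-o bounds
  have hbLE : sumLE a x y1 ≤ 1 / 2 * x ^ (-p) * I := by
    rw [abs_of_nonneg (div_nonneg hsumLE0 (le_of_lt hIpos)),
      abs_of_nonneg (le_of_lt hxppos)] at hb1x
    calc sumLE a x y1 = sumLE a x y1 / I * I := by field_simp
      _ ≤ 1 / 2 * x ^ (-p) * I := mul_le_mul_of_nonneg_right hb1x (le_of_lt hIpos)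
  have hbGE : sumGE a x y2 ≤ 1 / 2 * x ^ (-p) * I := by
    rw [abs_of_nonneg (div_nonneg hsumGE0 (le_of_lt hIpos)),
      abs_of_nonneg (le_of_lt hxppos)] at hb2x
    calc sumGE a x y2 = sumGE a x y2 / I * I := by field_simp
      _ ≤ 1 / 2 * x ^ (-p) * I := mul_le_mul_of_nonneg_right hb2x (le_of_lt hIpos)
  -- window count
  set N : ℕ := (⌊y2⌋).toNat with hNdef
  have hNle : (N : ℝ) ≤ y2 := by
    have h0 : (0 : ℤ) ≤ ⌊y2⌋ := Int.floor_nonneg.mpr (le_of_lt hy2pos)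
    have hcast : ((N : ℤ) : ℝ) = ((⌊y2⌋ : ℤ) : ℝ) := by rw [hNdef, Int.toNat_of_nonneg h0]
    push_cast at hcast
    rw [hcast]; exact Int.floor_le y2
  have hNcond : ∀ m : ℕ, ⌊y1⌋ < (m : ℤ) → (m : ℤ) < ⌊y2⌋ → m < N := by
    intro m _ h2'; omega
  -- the main split inequality
  have hsplit : I ≤ sumLE a x y1 + sumGE a x y2 + N * μ := by
    rw [hIg, hsLEeq, hsGEeq]
    exact tsum_split_bound g hg0 hs ⌊y1⌋ ⌊y2⌋ μ hμ N hNcond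
  -- rpow arithmetic : x^d * x^(-p) = x^(-2)
  have hrp : (x : ℝ) ^ d * x ^ (-p) = x ^ (-(2 : ℝ)) := by
    rw [← Real.rpow_natCast x d, ← Real.rpow_add hx0, hp]
    norm_num
  have hx2 : x ^ (-(2 : ℝ)) = (x ^ 2)⁻¹ := by
    have h2 : x ^ (2 : ℝ) = x ^ (2 : ℕ) := by
      rw [← Real.rpow_natCast x 2]; norm_num
    rw [Real.rpow_neg (le_of_lt hx0), h2]
  have hBsmall : B * x ^ (-(2 : ℝ)) < 1 := by
    rw [hx2]
    have hx2pos : (0 : ℝ) < x ^ 2 := by positivity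
    rw [mul_inv_lt_iff₀ hx2pos, one_mul]
    exact hBxx
  -- key: μ is strictly bigger than the tail bound
  have hkey : 1 / 2 * x ^ (-p) * I < μ := by
    have hIle : I ≤ 2 * (N * μ) := by
      have hxpI : x ^ (-p) * I ≤ 1 / 2 * I := by nlinarith
      linarith
    have hNB : (N : ℝ) ≤ B * x ^ d := le_trans hNle hy2ub
    calc 1 / 2 * x ^ (-p) * I ≤ 1 / 2 * x ^ (-p) * (2 * (N * μ)) := by
          apply mul_le_mul_of_nonneg_left hIle; positivity
      _ = x ^ (-p) * N * μ := by ring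
      _ ≤ x ^ (-p) * (B * x ^ d) * μ :=
          mul_le_mul_of_nonneg_right
            (mul_le_mul_of_nonneg_left hNB (le_of_lt hxppos)) (le_of_lt hμpos)
      _ = B * x ^ (-(2 : ℝ)) * μ := by rw [← hrp]; ring
      _ < 1 * μ := mul_lt_mul_of_pos_right hBsmall hμpos
      _ = μ := one_mul μ
  constructor
  · by_contra hcon
    push_neg at hcon
    have hμLE : μ ≤ sumLE a x y1 := by
      have h := Summable.le_tsum sLE n (fun j _ => by
        by_cases h : (j : ℤ) ≤ ⌊y1⌋ <;> simp [h, hg0 j])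
      rw [hsLEeq]
      simpa [hcon] using h
    linarith
  · by_contra hcon
    push_neg at hcon
    have hμGE : μ ≤ sumGE a x y2 := by
      have h := Summable.le_tsum sGE n (fun j _ => by
        by_cases h : ⌊y2⌋ ≤ (j : ℤ) <;> simp [h, hg0 j])
      rw [hsGEeq]
      simpa [hcon] using h
    linarith
end

section
/- Suppose the summands of an absolutely monotonic power series I(x) = Σ a_n x^n concentrate superpolynomially near n ≈ f(x), where f has degree d ≥ 1 and positive leading coefficient c_d. Then lim_{x→+∞} (log I(x))/x^d = c_d/d, and also lim_{x→+∞} (log μ(x))/x^d = c_d/d where μ(x) = max_n a_n x^n. -/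
/-!
Write `L(x) = log I(x)` and `n±(x) = f(x)(1 ± Cx^{-ν}) ~ c_d x^d`. Concentration puts at least half
of the mass of `I(x)` on the window `n₋(x) ≤ n ≤ n₊(x)`, so for fixed `l > 1`, up to `log 2`,
`n₋(x) log l ≤ L(lx) - L(x) ≤ n₊(lx) log l`. Summing along geometric progressions eventually
squeezes `L(y) / y^d` between (almost) `c_d log l / (l^d - 1)` and `c_d l^d log l / (l^d - 1)`,
and both tend to `c_d / d` as `l → 1`. The maximal term lies between `I(x) / (2 (n₊(x) + 1))`
and `I(x)`, which changes the logarithm by `O(log x) = o(x^d)`.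
-/

open Filter Asymptotics Polynomial

open Set Topology Real

lemma le_add_mul_pow_of_step {L : ℝ → ℝ} {l X K A B : ℝ} {d : ℕ} (hl : 1 < l) (hX : 0 < X)
    (hAB : B ≤ A * (l ^ d - 1)) (hbase : ∀ y ∈ Icc X (l * X), L y ≤ K + A * y ^ d)
    (hstep : ∀ x ≥ X, L (l * x) ≤ L x + B * x ^ d) {y : ℝ} (hy : X ≤ y) :
    L y ≤ K + A * y ^ d := by
  have hl₀ : 0 < l := one_pos.trans hl
  suffices ∀ k : ℕ, ∀ y ∈ Icc X (l ^ k * X), L y ≤ K + A * y ^ d by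
    obtain ⟨k, hk⟩ := pow_unbounded_of_one_lt (y / X) hl
    exact this k y ⟨hy, ((div_lt_iff₀ hX).mp hk).le⟩
  intro k
  induction k with
  | zero => exact fun y hy => hbase y ⟨hy.1, hy.2.trans (by nlinarith)⟩
  | succ k ih =>
    intro y ⟨hXy, hy⟩
    rcases le_or_gt y (l * X) with hylX | hlXy
    · exact hbase y ⟨hXy, hylX⟩
    set x := y / l
    have hxy : l * x = y := mul_div_cancel₀ y hl₀.ne'
    have hx : x ∈ Icc X (l ^ k * X) := by
      constructor
      · rw [le_div_iff₀ hl₀]; linarith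
      · rw [div_le_iff₀ hl₀]; rw [pow_succ] at hy; linarith
    calc L y = L (l * x) := by rw [hxy]
      _ ≤ K + A * x ^ d + B * x ^ d := by linarith [hstep x hx.1, ih x hx]
      _ ≤ K + A * (l * x) ^ d := by
        rw [mul_pow]; nlinarith [pow_nonneg (hX.le.trans hx.1) d]
      _ = K + A * y ^ d := by rw [hxy]

section

variable {L : ℝ → ℝ} {l B : ℝ} {d : ℕ}

lemma exists_eventually_le_add_mul_pow (hl : 1 < l) (hd : d ≠ 0) (hB : 0 ≤ B)
    (hL : MonotoneOn L (Ioi 0)) (hstep : ∀ᶠ x in atTop, L (l * x) ≤ L x + B * (l * x) ^ d) :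
    ∃ K, ∀ᶠ y in atTop, L y ≤ K + B * l ^ d / (l ^ d - 1) * y ^ d := by
  have hq : 0 < l ^ d - 1 := sub_pos.mpr (one_lt_pow₀ hl hd)
  obtain ⟨X, hX⟩ := eventually_atTop.mp hstep
  have hX₁ : 0 < max X 1 := zero_lt_one.trans_le (le_max_right _ _)
  have hbase : ∀ z ∈ Icc (max X 1) (l * max X 1),
      L z ≤ L (l * max X 1) + B * l ^ d / (l ^ d - 1) * z ^ d := fun z hz => by
    have hz₀ := hX₁.trans_le hz.1
    have : L z ≤ L (l * max X 1) := hL hz₀ (hz₀.trans_le hz.2) hz.2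
    have : 0 ≤ B * l ^ d / (l ^ d - 1) * z ^ d := by positivity
    linarith
  refine ⟨_, eventually_atTop.mpr ⟨max X 1, fun y hy => le_add_mul_pow_of_step (B := B * l ^ d)
    hl hX₁ (div_mul_cancel₀ _ hq.ne').ge hbase (fun x hx => ?_) hy⟩⟩
  simpa [mul_pow, mul_assoc] using hX x ((le_max_left _ _).trans hx)

lemma exists_eventually_add_mul_pow_le (hl : 1 < l) (hd : d ≠ 0) (hB : 0 ≤ B)
    (hL : MonotoneOn L (Ioi 0)) (hstep : ∀ᶠ x in atTop, L x + B * x ^ d ≤ L (l * x)) :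
    ∃ K, ∀ᶠ y in atTop, K + B / (l ^ d - 1) * y ^ d ≤ L y := by
  have hq : 0 < l ^ d - 1 := sub_pos.mpr (one_lt_pow₀ hl hd)
  obtain ⟨X, hX⟩ := eventually_atTop.mp hstep
  have hX₁ : 0 < max X 1 := zero_lt_one.trans_le (le_max_right _ _)
  set K := L (max X 1) - B / (l ^ d - 1) * (l * max X 1) ^ d
  have hbase : ∀ z ∈ Icc (max X 1) (l * max X 1), -L z ≤ -K + -(B / (l ^ d - 1)) * z ^ d :=
    fun z hz => by
      have : L (max X 1) ≤ L z := hL hX₁ (hX₁.trans_le hz.1) hz.1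
      have : B / (l ^ d - 1) * z ^ d ≤ B / (l ^ d - 1) * (l * max X 1) ^ d := by
        have := hX₁.trans_le hz.1
        gcongr; exact hz.2
      linarith
  refine ⟨K, eventually_atTop.mpr ⟨max X 1, fun y hy => ?_⟩⟩
  have := le_add_mul_pow_of_step (L := fun z => -L z) (B := -B) hl hX₁
    (by rw [neg_mul, div_mul_cancel₀ _ hq.ne']) hbase
    (fun x hx => by linarith [hX x ((le_max_left _ _).trans hx)]) hy
  linarith

end

section

variable {L : ℝ → ℝ} {K A b : ℝ} {d : ℕ}

lemma tendsto_add_mul_pow_div_pow (hd : d ≠ 0) :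
    Tendsto (fun y : ℝ => (K + A * y ^ d) / y ^ d) atTop (𝓝 A) := by
  have := (tendsto_const_nhds.div_atTop (tendsto_pow_atTop hd) :
    Tendsto (fun y : ℝ => K / y ^ d) atTop (𝓝 0)).add_const A
  rw [zero_add] at this
  refine this.congr' ?_
  filter_upwards [eventually_gt_atTop 0] with y hy
  field_simp

lemma eventually_div_pow_lt (hd : d ≠ 0) (hL : ∀ᶠ y in atTop, L y ≤ K + A * y ^ d)
    (hb : A < b) : ∀ᶠ y in atTop, L y / y ^ d < b := by
  filter_upwards [hL, (tendsto_add_mul_pow_div_pow hd).eventually_lt_const hb,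
    eventually_gt_atTop 0] with y hLy hy hy₀
  exact (div_le_div_of_nonneg_right hLy (pow_pos hy₀ d).le).trans_lt hy

lemma eventually_lt_div_pow (hd : d ≠ 0) (hL : ∀ᶠ y in atTop, K + A * y ^ d ≤ L y)
    (hb : b < A) : ∀ᶠ y in atTop, b < L y / y ^ d := by
  filter_upwards [hL, (tendsto_add_mul_pow_div_pow hd).eventually_const_lt hb,
    eventually_gt_atTop 0] with y hLy hy hy₀
  exact hy.trans_le (div_le_div_of_nonneg_right hLy (pow_pos hy₀ d).le)

end

lemma tendsto_mul_add_div_pow {u : ℝ → ℝ} {α : ℝ} {d : ℕ} (hd : d ≠ 0)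
    (hu : Tendsto (fun y => u y / y ^ d) atTop (𝓝 α)) (s K : ℝ) :
    Tendsto (fun y => (u y * s + K) / y ^ d) atTop (𝓝 (α * s)) := by
  have := (hu.mul_const s).add (tendsto_const_nhds.div_atTop (tendsto_pow_atTop hd) :
    Tendsto (fun y : ℝ => K / y ^ d) atTop (𝓝 0))
  rw [add_zero] at this
  exact this.congr fun y => by ring

lemma tendsto_log_div_pow_of_tendsto_div_pow {u : ℝ → ℝ} {α : ℝ} {d : ℕ} (hd : d ≠ 0)
    (hu : Tendsto (fun y => u y / y ^ d) atTop (𝓝 α)) (hα : 0 < α) :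
    Tendsto (fun y => log (u y) / y ^ d) atTop (𝓝 0) := by
  have hpos : ∀ᶠ y : ℝ in atTop, y ^ d ≠ 0 :=
    (eventually_gt_atTop 0).mono fun y hy => (pow_pos hy d).ne'
  have hu_top : Tendsto u atTop atTop :=
    (hu.pos_mul_atTop hα (tendsto_pow_atTop hd)).congr' <| hpos.mono fun y hy =>
      div_mul_cancel₀ (u y) hy
  have hO : u =O[atTop] fun y => y ^ d :=
    isBigO_of_div_tendsto_nhds (hpos.mono fun y hy h => absurd h hy) α hu
  exact ((isLittleO_log_id_atTop.comp_tendsto hu_top).trans_isBigO hO).tendsto_div_nhds_zero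

lemma tendsto_log_div_pow_sub_one {d : ℕ} (hd : d ≠ 0) :
    Tendsto (fun l : ℝ => log l / (l ^ d - 1)) (𝓝[>] 1) (𝓝 (1 / d)) := by
  have hlog := hasDerivAt_iff_tendsto_slope.mp (hasDerivAt_log one_ne_zero)
  have hpow := hasDerivAt_iff_tendsto_slope.mp (hasDerivAt_pow d (1 : ℝ))
  simp only [inv_one, one_pow, mul_one] at hlog hpow
  refine ((hlog.div hpow (Nat.cast_ne_zero.mpr hd)).congr' ?_).mono_left (nhdsGT_le_nhdsNE 1)
  filter_upwards [self_mem_nhdsWithin] with l (hl : l ≠ 1)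
  have : l - 1 ≠ 0 := sub_ne_zero.mpr hl
  simp only [Pi.div_apply, slope_def_field, log_one, one_pow, sub_zero]
  field_simp

/-- A discrete form of `x L'(x) ~ c x^d ⟹ L(x) ~ c x^d / d`. -/
theorem tendsto_div_pow_of_forall_step {L : ℝ → ℝ} {c : ℝ} {d : ℕ} (hd : d ≠ 0) (hc : 0 < c)
    (hL : MonotoneOn L (Ioi 0))
    (hup : ∀ l > 1, ∀ B > c * log l, ∀ᶠ x in atTop, L (l * x) ≤ L x + B * (l * x) ^ d)
    (hlo : ∀ l > 1, ∀ B < c * log l, ∀ᶠ x in atTop, L x + B * x ^ d ≤ L (l * x)) :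
    Tendsto (fun y => L y / y ^ d) atTop (𝓝 (c / d)) := by
  have hlim : Tendsto (fun l : ℝ => c * log l / (l ^ d - 1)) (𝓝[>] 1) (𝓝 (c / d)) := by
    simpa only [mul_div_assoc, mul_one_div] using (tendsto_log_div_pow_sub_one hd).const_mul c
  have hlim' : Tendsto (fun l : ℝ => c * log l / (l ^ d - 1) * l ^ d) (𝓝[>] 1) (𝓝 (c / d)) := by
    simpa using hlim.mul (((continuous_pow d).tendsto (1 : ℝ)).mono_left nhdsWithin_le_nhds)
  refine tendsto_order.mpr ⟨fun b hb => ?_, fun b hb => ?_⟩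
  · obtain ⟨l, hbl, hl⟩ := ((hlim.eventually_const_lt hb).and self_mem_nhdsWithin).exists
    have hq : 0 < l ^ d - 1 := sub_pos.mpr (one_lt_pow₀ hl hd)
    obtain ⟨B, hB₁, hB₂⟩ := exists_between
      (max_lt (mul_pos hc (log_pos hl)) ((lt_div_iff₀ hq).mp hbl))
    obtain ⟨K, hK⟩ := exists_eventually_add_mul_pow_le hl hd ((le_max_left _ _).trans hB₁.le) hL
      (hlo l hl B hB₂)
    exact eventually_lt_div_pow hd hK ((lt_div_iff₀ hq).mpr ((le_max_right _ _).trans_lt hB₁))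
  · obtain ⟨l, hbl, hl⟩ := ((hlim'.eventually_lt_const hb).and self_mem_nhdsWithin).exists
    have hq : 0 < l ^ d - 1 := sub_pos.mpr (one_lt_pow₀ hl hd)
    have hld : 0 < l ^ d := by positivity
    obtain ⟨B, hB₁, hB₂⟩ : ∃ B, c * log l < B ∧ B < b * (l ^ d - 1) / l ^ d := by
      refine exists_between ((lt_div_iff₀ hld).mpr ?_)
      rwa [div_mul_eq_mul_div, div_lt_iff₀ hq] at hbl
    obtain ⟨K, hK⟩ := exists_eventually_le_add_mul_pow hl hd
      ((mul_pos hc (log_pos hl)).le.trans hB₁.le) hL (hup l hl B hB₁)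
    exact eventually_div_pow_lt hd hK ((div_lt_iff₀ hq).mpr ((lt_div_iff₀ hld).mp hB₂))

noncomputable def windowSum (a : ℕ → ℝ) (x y₁ y₂ : ℝ) : ℝ :=
  ∑' n : ℕ, if y₁ ≤ n ∧ (n : ℝ) ≤ y₂ then a n * x ^ n else 0

namespace AbsMono

variable {a : ℕ → ℝ} {x l : ℝ} {w₁ w₂ : ℝ → ℝ}

lemma term_nonneg (ha : AbsMono a) (hx : 0 ≤ x) (n : ℕ) : 0 ≤ a n * x ^ n :=
  mul_nonneg (ha.1 n) (pow_nonneg hx n)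

lemma summable_ite (ha : AbsMono a) (hx : 0 < x) (P : ℕ → Prop) [DecidablePred P] :
    Summable fun n => if P n then a n * x ^ n else 0 := by
  refine (ha.2 x hx).of_nonneg_of_le (fun n => ?_) (fun n => ?_) <;> split_ifs
  all_goals first | exact le_rfl | exact ha.term_nonneg hx.le n

lemma term_le_Iser (ha : AbsMono a) (hx : 0 < x) (n : ℕ) : a n * x ^ n ≤ Iser a x :=
  (ha.2 x hx).le_tsum n fun m _ => ha.term_nonneg hx.le m

lemma Iser_pos_s4 (ha : AbsMono a) (hne : ∃ n, a n ≠ 0) (hx : 0 < x) : 0 < Iser a x := by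
  obtain ⟨n, hn⟩ := hne
  exact (mul_pos ((ha.1 n).lt_of_ne' hn) (pow_pos hx n)).trans_le (ha.term_le_Iser hx n)

lemma monotoneOn_Iser (ha : AbsMono a) : MonotoneOn (Iser a) (Ioi 0) := fun x hx y hy hxy =>
  (ha.2 x hx).tsum_le_tsum (fun n => mul_le_mul_of_nonneg_left
    (pow_le_pow_left₀ (le_of_lt hx) hxy n) (ha.1 n)) (ha.2 y hy)

lemma Iser_le_sumLE_add_sumGE_add_windowSum (ha : AbsMono a) (hx : 0 < x) (y₁ y₂ : ℝ) :
    Iser a x ≤ sumLE a x y₁ + sumGE a x y₂ + windowSum a x y₁ y₂ := by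
  unfold Iser sumLE sumGE windowSum
  rw [← (ha.summable_ite hx _).tsum_add (ha.summable_ite hx _),
    ← ((ha.summable_ite hx _).add (ha.summable_ite hx _)).tsum_add (ha.summable_ite hx _)]
  refine (ha.2 x hx).tsum_le_tsum (fun n => ?_)
    (((ha.summable_ite hx _).add (ha.summable_ite hx _)).add (ha.summable_ite hx _))
  have h₀ := ha.term_nonneg hx.le n
  by_cases h₁ : (n : ℤ) ≤ ⌊y₁⌋
  · simp only [if_pos h₁]; split_ifs <;> linarith
  by_cases h₂ : ⌊y₂⌋ ≤ (n : ℤ)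
  · simp only [if_pos h₂]; split_ifs <;> linarith
  have hwin : y₁ ≤ n ∧ (n : ℝ) ≤ y₂ :=
    ⟨(Int.floor_lt.mp (not_le.mp h₁)).le, by exact_mod_cast Int.le_floor.mp (not_le.mp h₂).le⟩
  simp only [if_neg h₁, if_neg h₂, if_pos hwin, zero_add, le_refl]

lemma windowSum_mul_le (ha : AbsMono a) (hx : 0 < x) (hl : 1 ≤ l) (y₁ y₂ : ℝ) :
    windowSum a (l * x) y₁ y₂ ≤ l ^ y₂ * Iser a x := by
  rw [Iser, ← tsum_mul_left]
  refine (ha.summable_ite (by positivity) _).tsum_le_tsum (fun n => ?_) ((ha.2 x hx).mul_left _)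
  split_ifs with hn
  · calc a n * (l * x) ^ n = l ^ (n : ℝ) * (a n * x ^ n) := by rw [rpow_natCast]; ring
      _ ≤ l ^ y₂ * (a n * x ^ n) :=
          mul_le_mul_of_nonneg_right (rpow_le_rpow_of_exponent_le hl hn.2)
            (ha.term_nonneg hx.le n)
  · exact mul_nonneg (by positivity) (ha.term_nonneg hx.le n)

lemma rpow_mul_windowSum_le (ha : AbsMono a) (hx : 0 < x) (hl : 1 ≤ l) (y₁ y₂ : ℝ) :
    l ^ y₁ * windowSum a x y₁ y₂ ≤ Iser a (l * x) := by
  rw [windowSum, ← tsum_mul_left]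
  refine ((ha.summable_ite hx _).mul_left _).tsum_le_tsum (fun n => ?_) (ha.2 _ (by positivity))
  split_ifs with hn
  · calc l ^ y₁ * (a n * x ^ n) ≤ l ^ (n : ℝ) * (a n * x ^ n) :=
          mul_le_mul_of_nonneg_right (rpow_le_rpow_of_exponent_le hl hn.1)
            (ha.term_nonneg hx.le n)
      _ = a n * (l * x) ^ n := by rw [rpow_natCast]; ring
  · rw [mul_zero]; exact ha.term_nonneg (by positivity) n

lemma bddAbove_range (ha : AbsMono a) (hx : 0 < x) : BddAbove (range fun n => a n * x ^ n) :=
  ⟨Iser a x, forall_mem_range.mpr (ha.term_le_Iser hx)⟩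

lemma iSup_pos (ha : AbsMono a) (hne : ∃ n, a n ≠ 0) (hx : 0 < x) :
    0 < ⨆ n, a n * x ^ n := by
  obtain ⟨n, hn⟩ := hne
  exact (mul_pos ((ha.1 n).lt_of_ne' hn) (pow_pos hx n)).trans_le
    (le_ciSup (ha.bddAbove_range hx) n)

lemma iSup_le_Iser (ha : AbsMono a) (hx : 0 < x) : ⨆ n, a n * x ^ n ≤ Iser a x :=
  ciSup_le (ha.term_le_Iser hx)

lemma windowSum_le_mul_iSup (ha : AbsMono a) (hx : 0 < x) {y₂ : ℝ} (hy₂ : 0 ≤ y₂) (y₁ : ℝ) :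
    windowSum a x y₁ y₂ ≤ (y₂ + 1) * ⨆ n, a n * x ^ n := by
  have hsupp : ∀ n ∉ Finset.range (⌊y₂⌋₊ + 1),
      (if y₁ ≤ n ∧ (n : ℝ) ≤ y₂ then a n * x ^ n else 0) = 0 := fun n hn =>
    if_neg fun h => hn (Finset.mem_range_succ_iff.mpr (Nat.le_floor h.2))
  have hμ : 0 ≤ ⨆ n, a n * x ^ n :=
    (ha.term_nonneg hx.le 0).trans (le_ciSup (ha.bddAbove_range hx) 0)
  calc windowSum a x y₁ y₂ ≤ ∑ _n ∈ Finset.range (⌊y₂⌋₊ + 1), ⨆ n, a n * x ^ n := by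
        rw [windowSum, tsum_eq_sum hsupp]
        refine Finset.sum_le_sum fun n _ => ?_
        split_ifs
        exacts [le_ciSup (ha.bddAbove_range hx) n, hμ]
    _ = (⌊y₂⌋₊ + 1) * ⨆ n, a n * x ^ n := by simp
    _ ≤ (y₂ + 1) * ⨆ n, a n * x ^ n := by gcongr; exact Nat.floor_le hy₂

lemma eventually_log_Iser_mul_le (ha : AbsMono a) (hne : ∃ n, a n ≠ 0)
    (hI : ∀ᶠ x in atTop, Iser a x ≤ 2 * windowSum a x (w₁ x) (w₂ x)) (hl : 1 ≤ l) :
    ∀ᶠ x in atTop, log (Iser a (l * x)) ≤ log (Iser a x) + (w₂ (l * x) * log l + log 2) := by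
  have hl₀ : 0 < l := one_pos.trans_le hl
  filter_upwards [(tendsto_id.const_mul_atTop hl₀).eventually hI, eventually_gt_atTop 0]
    with x hIl hx
  have hIx₀ := ha.Iser_pos_s4 hne hx
  have := hIl.trans (mul_le_mul_of_nonneg_left (ha.windowSum_mul_le hx hl _ _) zero_le_two)
  calc log (Iser a (l * x)) ≤ log (2 * (l ^ w₂ (l * x) * Iser a x)) :=
        log_le_log (ha.Iser_pos_s4 hne (by positivity)) this
    _ = log (Iser a x) + (w₂ (l * x) * log l + log 2) := by
        rw [log_mul two_ne_zero (by positivity), log_mul (by positivity) hIx₀.ne', log_rpow hl₀]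
        ring

lemma eventually_add_le_log_Iser_mul (ha : AbsMono a) (hne : ∃ n, a n ≠ 0)
    (hI : ∀ᶠ x in atTop, Iser a x ≤ 2 * windowSum a x (w₁ x) (w₂ x)) (hl : 1 ≤ l) :
    ∀ᶠ x in atTop, log (Iser a x) + (w₁ x * log l + -log 2) ≤ log (Iser a (l * x)) := by
  have hl₀ : 0 < l := one_pos.trans_le hl
  filter_upwards [hI, eventually_gt_atTop 0] with x hIx hx
  have hIx₀ := ha.Iser_pos_s4 hne hx
  have : l ^ w₁ x * (Iser a x / 2) ≤ Iser a (l * x) :=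
    (mul_le_mul_of_nonneg_left (by linarith) (by positivity)).trans
      (ha.rpow_mul_windowSum_le hx hl _ (w₂ x))
  calc log (Iser a x) + (w₁ x * log l + -log 2) = log (l ^ w₁ x * (Iser a x / 2)) := by
        rw [log_mul (by positivity) (by positivity), log_rpow hl₀, log_div hIx₀.ne' two_ne_zero]
        ring
    _ ≤ log (Iser a (l * x)) := log_le_log (by positivity) this

end AbsMono

lemma SuperConc.eventually_Iser_le_two_mul_windowSum {a : ℕ → ℝ} {g : ℝ → ℝ} {C ν : ℝ}
    (hconc : SuperConc a g C ν) (ha : AbsMono a) (hne : ∃ n, a n ≠ 0) :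
    ∀ᶠ x in atTop, Iser a x ≤
      2 * windowSum a x (g x * (1 - C * x ^ (-ν))) (g x * (1 + C * x ^ (-ν))) := by
  obtain ⟨hLE, hGE⟩ := hconc 1 one_pos
  have h₀ : Tendsto (fun x : ℝ => x ^ (-1 : ℝ)) atTop (𝓝 0) := tendsto_rpow_neg_atTop one_pos
  filter_upwards [(hLE.trans_tendsto h₀).eventually_lt_const (by norm_num : (0 : ℝ) < 1 / 4),
    (hGE.trans_tendsto h₀).eventually_lt_const (by norm_num : (0 : ℝ) < 1 / 4),
    eventually_gt_atTop 0] with x hLE hGE hx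
  rw [div_lt_iff₀ (ha.Iser_pos_s4 hne hx)] at hLE hGE
  linarith [ha.Iser_le_sumLE_add_sumGE_add_windowSum hx (g x * (1 - C * x ^ (-ν)))
    (g x * (1 + C * x ^ (-ν)))]

section

variable {a : ℕ → ℝ} {w₁ w₂ : ℝ → ℝ} {c : ℝ} {d : ℕ}

theorem tendsto_log_Iser_div_pow (ha : AbsMono a) (hne : ∃ n, a n ≠ 0) (hd : d ≠ 0)
    (hc : 0 < c) (hI : ∀ᶠ x in atTop, Iser a x ≤ 2 * windowSum a x (w₁ x) (w₂ x))
    (h₁ : Tendsto (fun x => w₁ x / x ^ d) atTop (𝓝 c))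
    (h₂ : Tendsto (fun x => w₂ x / x ^ d) atTop (𝓝 c)) :
    Tendsto (fun x => log (Iser a x) / x ^ d) atTop (𝓝 (c / d)) := by
  refine tendsto_div_pow_of_forall_step hd hc (fun x hx y hy hxy =>
    log_le_log (ha.Iser_pos_s4 hne hx) (ha.monotoneOn_Iser hx hy hxy)) (fun l hl B hB => ?_)
    (fun l hl B hB => ?_)
  · have hlx : Tendsto (fun x => l * x) atTop atTop := tendsto_id.const_mul_atTop (by positivity)
    have hB' := (tendsto_mul_add_div_pow hd h₂ (log l) (log 2)).eventually_lt_const hB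
    filter_upwards [ha.eventually_log_Iser_mul_le hne hI hl.le,
      hlx.eventually (hB'.and (eventually_gt_atTop 0))] with x hstep ⟨hBx, hx⟩
    linarith [(div_lt_iff₀ (pow_pos hx d)).mp hBx]
  · have hB' := (tendsto_mul_add_div_pow hd h₁ (log l) (-log 2)).eventually_const_lt hB
    filter_upwards [ha.eventually_add_le_log_Iser_mul hne hI hl.le, hB',
      eventually_gt_atTop 0] with x hstep hBx hx
    linarith [(lt_div_iff₀ (pow_pos hx d)).mp hBx]

theorem tendsto_log_iSup_div_pow (ha : AbsMono a) (hne : ∃ n, a n ≠ 0) (hd : d ≠ 0)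
    (hc : 0 < c) (hI : ∀ᶠ x in atTop, Iser a x ≤ 2 * windowSum a x (w₁ x) (w₂ x))
    (h₂ : Tendsto (fun x => w₂ x / x ^ d) atTop (𝓝 c))
    (hlog : Tendsto (fun x => log (Iser a x) / x ^ d) atTop (𝓝 (c / d))) :
    Tendsto (fun x => log (⨆ n, a n * x ^ n) / x ^ d) atTop (𝓝 (c / d)) := by
  have hN := tendsto_log_div_pow_of_tendsto_div_pow hd (tendsto_mul_add_div_pow hd h₂ 2 2)
    (by positivity)
  have hlow := hlog.sub hN
  rw [sub_zero] at hlow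
  refine tendsto_of_tendsto_of_tendsto_of_le_of_le' hlow hlog ?_ ?_
  · filter_upwards [hI, eventually_gt_atTop 0, h₂.eventually_const_lt hc] with x hIx hx hw₂d
    have hw₂ : 0 ≤ w₂ x := ((div_pos_iff_of_pos_right (pow_pos hx d)).mp hw₂d).le
    have hIx₀ := ha.Iser_pos_s4 hne hx
    have hμ := ha.iSup_pos hne hx
    have : Iser a x ≤ (w₂ x * 2 + 2) * ⨆ n, a n * x ^ n := by
      nlinarith [ha.windowSum_le_mul_iSup hx hw₂ (w₁ x)]
    rw [← sub_div]
    gcongr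
    rw [sub_le_iff_le_add, add_comm, ← log_mul (by positivity) hμ.ne']
    exact log_le_log hIx₀ this
  · filter_upwards [eventually_gt_atTop 0] with x hx
    gcongr
    exacts [ha.iSup_pos hne hx, ha.iSup_le_Iser hx]

end

lemma Polynomial.tendsto_eval_mul_div_pow_natDegree {f : ℝ[X]} (hf : f ≠ 0) {s : ℝ → ℝ}
    (hs : Tendsto s atTop (𝓝 1)) :
    Tendsto (fun x => f.eval x * s x / x ^ f.natDegree) atTop (𝓝 f.leadingCoeff) := by
  have h := f.div_tendsto_atTop_leadingCoeff_div_of_degree_eq (X ^ f.natDegree)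
    (by rw [degree_X_pow, degree_eq_natDegree hf])
  simp only [eval_pow, eval_X, leadingCoeff_X_pow, div_one] at h
  simpa only [mul_one] using (h.mul hs).congr fun x => by ring

theorem stmt4_general (a : ℕ → ℝ) (f : Polynomial ℝ) (C ν : ℝ) (hν : 0 < ν)
    (ha : AbsMono a) (hne : ∃ n, a n ≠ 0) (hlead : 0 < f.leadingCoeff)
    (hd : 1 ≤ f.natDegree)
    (hconc : SuperConc a (fun x => f.eval x) C ν) :
    Tendsto (fun x : ℝ => Real.log (Iser a x) / x ^ f.natDegree) atTop
        (nhds (f.leadingCoeff / f.natDegree)) ∧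
      Tendsto (fun x : ℝ => Real.log (⨆ n : ℕ, a n * x ^ n) / x ^ f.natDegree) atTop
        (nhds (f.leadingCoeff / f.natDegree)) := by
  have hf : f ≠ 0 := fun h => by simp [h] at hlead
  have hwindow : ∀ σ : ℝ, Tendsto (fun x => f.eval x * (1 + σ * C * x ^ (-ν)) / x ^ f.natDegree)
      atTop (𝓝 f.leadingCoeff) := fun σ =>
    f.tendsto_eval_mul_div_pow_natDegree hf <| by
      simpa using tendsto_const_nhds.add ((tendsto_rpow_neg_atTop hν).const_mul (σ * C))
  have h₁ := hwindow (-1)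
  have h₂ := hwindow 1
  simp only [neg_mul, ← sub_eq_add_neg, one_mul] at h₁ h₂
  have hI := hconc.eventually_Iser_le_two_mul_windowSum ha hne
  have hd₀ : f.natDegree ≠ 0 := Nat.one_le_iff_ne_zero.mp hd
  have hlog := tendsto_log_Iser_div_pow ha hne hd₀ hlead hI h₁ h₂
  exact ⟨hlog, tendsto_log_iSup_div_pow ha hne hd₀ hlead hI h₂ hlog⟩

theorem stmt4 (a : ℕ → ℝ) (f : Polynomial ℝ) (C ν : ℝ) (hC : 0 < C) (hν : 0 < ν)
    (ha : AbsMono a) (hne : ∃ n, a n ≠ 0) (hlead : 0 < f.leadingCoeff)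
    (hd : 1 ≤ f.natDegree)
    (hconc : SuperConc a (fun x => f.eval x) C ν) :
    Tendsto (fun x : ℝ => Real.log (Iser a x) / x ^ f.natDegree) atTop
        (nhds (f.leadingCoeff / f.natDegree)) ∧
      Tendsto (fun x : ℝ => Real.log (⨆ n : ℕ, a n * x ^ n) / x ^ f.natDegree) atTop
        (nhds (f.leadingCoeff / f.natDegree)) :=
  stmt4_general a f C ν hν ha hne hlead hd hconc
end
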